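/- arXiv:2604.09530 — 4 statements merged into one kernel-verified Lean document; each statement's English description precedes it below -/
import Mathlib

section
/- Let μ₀, β₂, K₀, K₂ ∈ ℝ with K₀ ≠ K₂, K₀ + K₂ ≠ 0, and -(K₀β₂² + (K₀-K₂)²μ₀)/((K₀+K₂)(K₀-K₂)²) ≥ 0. Set A₁ = β₂/(K₀ - K₂) and A₂ = A₃ = √(-(K₀β₂² + (K₀-K₂)²μ₀)/((K₀+K₂)(K₀-K₂)²)). Then (A₁, A₂, A₃) solves the stationary hexagonal Landau system μ₀Aⱼ + β₂AₗAₘ + (K₀Aⱼ² + K₂(Aₗ² + Aₘ²))Aⱼ = 0 for {j,l,m} = {1,2,3}. -/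
/-- Mixed-mode equilibrium of the stationary hexagonal Landau system:
with `K₀ ≠ K₂`, `K₀ + K₂ ≠ 0` and
`-(K₀β₂² + (K₀-K₂)²μ₀)/((K₀+K₂)(K₀-K₂)²) ≥ 0`, setting
`A₁ = β₂/(K₀-K₂)` and `A₂ = A₃ = √(-(K₀β₂² + (K₀-K₂)²μ₀)/((K₀+K₂)(K₀-K₂)²))`,
the triple `(A₁, A₂, A₃)` solves the stationary system. -/
theorem stmt10 (μ₀ β₂ K₀ K₂ : ℝ) (h1 : K₀ ≠ K₂) (h2 : K₀ + K₂ ≠ 0)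
    (h3 : 0 ≤ -(K₀ * β₂^2 + (K₀ - K₂)^2 * μ₀) / ((K₀ + K₂) * (K₀ - K₂)^2))
    (A1 A2 A3 : ℝ) (hA1 : A1 = β₂ / (K₀ - K₂))
    (hA2 : A2 = Real.sqrt (-(K₀ * β₂^2 + (K₀ - K₂)^2 * μ₀) / ((K₀ + K₂) * (K₀ - K₂)^2)))
    (hA3 : A3 = Real.sqrt (-(K₀ * β₂^2 + (K₀ - K₂)^2 * μ₀) / ((K₀ + K₂) * (K₀ - K₂)^2))) :
    μ₀ * A1 + β₂ * (A2 * A3) + (K₀ * A1^2 + K₂ * (A2^2 + A3^2)) * A1 = 0 ∧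
    μ₀ * A2 + β₂ * (A1 * A3) + (K₀ * A2^2 + K₂ * (A1^2 + A3^2)) * A2 = 0 ∧
    μ₀ * A3 + β₂ * (A1 * A2) + (K₀ * A3^2 + K₂ * (A1^2 + A2^2)) * A3 = 0 := by
  have hd : K₀ - K₂ ≠ 0 := sub_ne_zero.mpr h1
  set q : ℝ := -(K₀ * β₂^2 + (K₀ - K₂)^2 * μ₀) / ((K₀ + K₂) * (K₀ - K₂)^2) with hqdef
  have hsq : A2 ^ 2 = q := by rw [hA2, Real.sq_sqrt h3]
  have hA23 : A3 = A2 := by rw [hA3, hA2]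
  have hq : q = -(K₀ * β₂^2 + (K₀ - K₂)^2 * μ₀) / ((K₀ + K₂) * (K₀ - K₂)^2) := hqdef
  have key : μ₀ + β₂ * A1 + (K₀ + K₂) * q + K₂ * A1 ^ 2 = 0 := by
    rw [hA1, hq]; field_simp; ring
  refine ⟨?_, ?_, ?_⟩
  · have h23 : A2 * A3 = q := by rw [hA23, ← hsq]; ring
    have h2sq : A2 ^ 2 = q := hsq
    have h3sq : A3 ^ 2 = q := by rw [hA23]; exact hsq
    rw [h23, h2sq, h3sq, hA1, hq]; field_simp; ring
  · have : μ₀ * A2 + β₂ * (A1 * A3) + (K₀ * A2^2 + K₂ * (A1^2 + A3^2)) * A2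
        = A2 * (μ₀ + β₂ * A1 + (K₀ + K₂) * q + K₂ * A1 ^ 2) := by
      rw [hA23]; linear_combination ((K₀ + K₂) * A2) * hsq
    rw [this, key, mul_zero]
  · have : μ₀ * A3 + β₂ * (A1 * A2) + (K₀ * A3^2 + K₂ * (A1^2 + A2^2)) * A3
        = A2 * (μ₀ + β₂ * A1 + (K₀ + K₂) * q + K₂ * A1 ^ 2) := by
      rw [hA23]; linear_combination ((K₀ + K₂) * A2) * hsq
    rw [this, key, mul_zero]
end

section
/- Define H(A, B) = Σⱼ 2(d·kⱼ)²Bⱼ² + (μ₀/2)Σⱼ Aⱼ² + β₂A₁A₂A₃ + (K₀/4)Σⱼ Aⱼ⁴ + (K₂/2)(A₁²A₂² + A₁²A₃² + A₂²A₃²) for real A = (A₁,A₂,A₃), B = (B₁,B₂,B₃). If (A(Ξ), B(Ξ)) is a differentiable solution of the system ∂_Ξ Aⱼ = Bⱼ, 4(d·kⱼ)²∂_Ξ Bⱼ = -μ₀Aⱼ - c₀Bⱼ - β₂AₗAₘ - (K₀Aⱼ² + K₂(Aₗ² + Aₘ²))Aⱼ (for {j,l,m} = {1,2,3}), then d/dΞ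 H(A(Ξ), B(Ξ)) = -c₀(B₁(Ξ)² + B₂(Ξ)² + B₃(Ξ)²). In particular H is non-increasing along solutions when c₀ > 0. -/
/-!
The system is a damped Newton equation `4(d·kⱼ)² Aⱼ'' = -∂ⱼV(A) - c₀ Aⱼ'` for the quartic
potential `V = hexPotential μ₀ β₂ K₀ K₂`, and `H` is kinetic plus potential energy.
Differentiating, the force terms `-∂ⱼV(A) Bⱼ` cancel against `dV(A)/dΞ = Σⱼ ∂ⱼV(A) Bⱼ`,
leaving only the friction `-c₀ Σⱼ Bⱼ²`.
-/

/-- Euclidean dot product on `ℝ²` (represented as `ℝ × ℝ`). -/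
def dot2 (v w : ℝ × ℝ) : ℝ := v.1 * w.1 + v.2 * w.2

noncomputable def hexPotential (μ₀ β₂ K₀ K₂ a₁ a₂ a₃ : ℝ) : ℝ :=
  μ₀ / 2 * (a₁ ^ 2 + a₂ ^ 2 + a₃ ^ 2) + β₂ * a₁ * a₂ * a₃ + K₀ / 4 * (a₁ ^ 4 + a₂ ^ 4 + a₃ ^ 4)
    + K₂ / 2 * (a₁ ^ 2 * a₂ ^ 2 + a₁ ^ 2 * a₃ ^ 2 + a₂ ^ 2 * a₃ ^ 2)

/-- `∂ⱼV` at a point with `j`-th coordinate `aⱼ` and other coordinates `aₗ, aₘ`; by the symmetry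
of `V` this one formula gives all three partial derivatives. -/
def hexPotentialPartial (μ₀ β₂ K₀ K₂ aⱼ aₗ aₘ : ℝ) : ℝ :=
  μ₀ * aⱼ + β₂ * aₗ * aₘ + (K₀ * aⱼ ^ 2 + K₂ * (aₗ ^ 2 + aₘ ^ 2)) * aⱼ

theorem HasDerivAt.hexPotential_comp (μ₀ β₂ K₀ K₂ : ℝ) {A₁ A₂ A₃ : ℝ → ℝ} {b₁ b₂ b₃ t : ℝ}
    (h₁ : HasDerivAt A₁ b₁ t) (h₂ : HasDerivAt A₂ b₂ t) (h₃ : HasDerivAt A₃ b₃ t) :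
    HasDerivAt (fun s => hexPotential μ₀ β₂ K₀ K₂ (A₁ s) (A₂ s) (A₃ s))
      (hexPotentialPartial μ₀ β₂ K₀ K₂ (A₁ t) (A₂ t) (A₃ t) * b₁
        + hexPotentialPartial μ₀ β₂ K₀ K₂ (A₂ t) (A₁ t) (A₃ t) * b₂
        + hexPotentialPartial μ₀ β₂ K₀ K₂ (A₃ t) (A₁ t) (A₂ t) * b₃) t := by
  have h : HasDerivAt (fun s => hexPotential μ₀ β₂ K₀ K₂ (A₁ s) (A₂ s) (A₃ s)) _ t :=
    ((((((h₁.pow 2).add (h₂.pow 2)).add (h₃.pow 2)).const_mul (μ₀ / 2)).add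
      (((h₁.const_mul β₂).mul h₂).mul h₃)).add
      ((((h₁.pow 4).add (h₂.pow 4)).add (h₃.pow 4)).const_mul (K₀ / 4))).add
      (((((h₁.pow 2).mul (h₂.pow 2)).add ((h₁.pow 2).mul (h₃.pow 2))).add
        ((h₂.pow 2).mul (h₃.pow 2))).const_mul (K₂ / 2))
  refine h.congr_deriv ?_
  simp only [hexPotentialPartial, Pi.mul_apply, Pi.pow_apply]
  ring

theorem HasDerivAt.damped_kinetic_energy {m c f b' t : ℝ} {B : ℝ → ℝ} (hB : HasDerivAt B b' t)
    (hode : 4 * m * b' = -f - c * B t) :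
    HasDerivAt (fun s => 2 * m * B s ^ 2) (-(f * B t) - c * B t ^ 2) t := by
  refine ((hB.pow 2).const_mul (2 * m)).congr_deriv ?_
  linear_combination B t * hode

theorem stmt11_general (d k1 k2 k3 : ℝ × ℝ)
    (μ₀ c₀ β₂ K₀ K₂ : ℝ)
    (A1 A2 A3 B1 B2 B3 B1' B2' B3' H : ℝ → ℝ)
    (hH : ∀ t, H t =
        2 * (dot2 d k1)^2 * (B1 t)^2 + 2 * (dot2 d k2)^2 * (B2 t)^2
          + 2 * (dot2 d k3)^2 * (B3 t)^2
        + μ₀ / 2 * ((A1 t)^2 + (A2 t)^2 + (A3 t)^2)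
        + β₂ * (A1 t) * (A2 t) * (A3 t)
        + K₀ / 4 * ((A1 t)^4 + (A2 t)^4 + (A3 t)^4)
        + K₂ / 2 * ((A1 t)^2 * (A2 t)^2 + (A1 t)^2 * (A3 t)^2 + (A2 t)^2 * (A3 t)^2))
    (hA1 : ∀ t, HasDerivAt A1 (B1 t) t)
    (hA2 : ∀ t, HasDerivAt A2 (B2 t) t)
    (hA3 : ∀ t, HasDerivAt A3 (B3 t) t)
    (hB1 : ∀ t, HasDerivAt B1 (B1' t) t)
    (hB2 : ∀ t, HasDerivAt B2 (B2' t) t)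
    (hB3 : ∀ t, HasDerivAt B3 (B3' t) t)
    (hode1 : ∀ t, 4 * (dot2 d k1)^2 * B1' t =
        -μ₀ * A1 t - c₀ * B1 t - β₂ * (A2 t) * (A3 t)
          - (K₀ * (A1 t)^2 + K₂ * ((A2 t)^2 + (A3 t)^2)) * A1 t)
    (hode2 : ∀ t, 4 * (dot2 d k2)^2 * B2' t =
        -μ₀ * A2 t - c₀ * B2 t - β₂ * (A1 t) * (A3 t)
          - (K₀ * (A2 t)^2 + K₂ * ((A1 t)^2 + (A3 t)^2)) * A2 t)
    (hode3 : ∀ t, 4 * (dot2 d k3)^2 * B3' t =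
        -μ₀ * A3 t - c₀ * B3 t - β₂ * (A1 t) * (A2 t)
          - (K₀ * (A3 t)^2 + K₂ * ((A1 t)^2 + (A2 t)^2)) * A3 t) :
    (∀ t, HasDerivAt H (-c₀ * ((B1 t)^2 + (B2 t)^2 + (B3 t)^2)) t) ∧
    (0 < c₀ → ∀ s t : ℝ, s ≤ t → H t ≤ H s) := by
  set P := hexPotentialPartial μ₀ β₂ K₀ K₂
  have hH_energy : H = fun t => 2 * (dot2 d k1) ^ 2 * B1 t ^ 2 + 2 * (dot2 d k2) ^ 2 * B2 t ^ 2
      + 2 * (dot2 d k3) ^ 2 * B3 t ^ 2 + hexPotential μ₀ β₂ K₀ K₂ (A1 t) (A2 t) (A3 t) :=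
    funext fun t => by rw [hH, hexPotential]; ring
  have hderiv : ∀ t, HasDerivAt H (-c₀ * ((B1 t)^2 + (B2 t)^2 + (B3 t)^2)) t := by
    intro t
    have h1 := (hB1 t).damped_kinetic_energy (c := c₀) (f := P (A1 t) (A2 t) (A3 t))
      (by rw [hode1]; simp only [P, hexPotentialPartial]; ring)
    have h2 := (hB2 t).damped_kinetic_energy (c := c₀) (f := P (A2 t) (A1 t) (A3 t))
      (by rw [hode2]; simp only [P, hexPotentialPartial]; ring)
    have h3 := (hB3 t).damped_kinetic_energy (c := c₀) (f := P (A3 t) (A1 t) (A2 t))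
      (by rw [hode3]; simp only [P, hexPotentialPartial]; ring)
    rw [hH_energy]
    have hV := (hA1 t).hexPotential_comp μ₀ β₂ K₀ K₂ (hA2 t) (hA3 t)
    exact (((h1.add h2).add h3).add hV).congr_deriv (by ring)
  refine ⟨hderiv, fun hc _ _ hst => antitone_of_hasDerivAt_nonpos hderiv (fun t => ?_) hst⟩
  show -c₀ * _ ≤ 0
  rw [neg_mul, neg_nonpos]
  positivity

/-- Along any differentiable solution of the real leading-order reduced
travelling-wave system `∂Aⱼ = Bⱼ`, `4(d·kⱼ)²∂Bⱼ = -μ₀Aⱼ - c₀Bⱼ - β₂AₗAₘ -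
(K₀Aⱼ² + K₂(Aₗ²+Aₘ²))Aⱼ`, the Lyapunov function
`H = Σⱼ 2(d·kⱼ)²Bⱼ² + (μ₀/2)ΣⱼAⱼ² + β₂A₁A₂A₃ + (K₀/4)ΣⱼAⱼ⁴ +
(K₂/2)(A₁²A₂² + A₁²A₃² + A₂²A₃²)` satisfies
`dH/dΞ = -c₀(B₁² + B₂² + B₃²)`; in particular `H` is non-increasing along
solutions when `c₀ > 0`. -/
theorem stmt11 (d k1 k2 k3 : ℝ × ℝ) (hd : dot2 d d = 1)
    (hk1 : dot2 d k1 ≠ 0) (hk2 : dot2 d k2 ≠ 0) (hk3 : dot2 d k3 ≠ 0)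
    (hksum : k1 + k2 + k3 = 0)
    (μ₀ c₀ β₂ K₀ K₂ : ℝ)
    (A1 A2 A3 B1 B2 B3 B1' B2' B3' H : ℝ → ℝ)
    (hH : ∀ t, H t =
        2 * (dot2 d k1)^2 * (B1 t)^2 + 2 * (dot2 d k2)^2 * (B2 t)^2
          + 2 * (dot2 d k3)^2 * (B3 t)^2
        + μ₀ / 2 * ((A1 t)^2 + (A2 t)^2 + (A3 t)^2)
        + β₂ * (A1 t) * (A2 t) * (A3 t)
        + K₀ / 4 * ((A1 t)^4 + (A2 t)^4 + (A3 t)^4)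
        + K₂ / 2 * ((A1 t)^2 * (A2 t)^2 + (A1 t)^2 * (A3 t)^2 + (A2 t)^2 * (A3 t)^2))
    (hA1 : ∀ t, HasDerivAt A1 (B1 t) t)
    (hA2 : ∀ t, HasDerivAt A2 (B2 t) t)
    (hA3 : ∀ t, HasDerivAt A3 (B3 t) t)
    (hB1 : ∀ t, HasDerivAt B1 (B1' t) t)
    (hB2 : ∀ t, HasDerivAt B2 (B2' t) t)
    (hB3 : ∀ t, HasDerivAt B3 (B3' t) t)
    (hode1 : ∀ t, 4 * (dot2 d k1)^2 * B1' t =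
        -μ₀ * A1 t - c₀ * B1 t - β₂ * (A2 t) * (A3 t)
          - (K₀ * (A1 t)^2 + K₂ * ((A2 t)^2 + (A3 t)^2)) * A1 t)
    (hode2 : ∀ t, 4 * (dot2 d k2)^2 * B2' t =
        -μ₀ * A2 t - c₀ * B2 t - β₂ * (A1 t) * (A3 t)
          - (K₀ * (A2 t)^2 + K₂ * ((A1 t)^2 + (A3 t)^2)) * A2 t)
    (hode3 : ∀ t, 4 * (dot2 d k3)^2 * B3' t =
        -μ₀ * A3 t - c₀ * B3 t - β₂ * (A1 t) * (A2 t)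
          - (K₀ * (A3 t)^2 + K₂ * ((A1 t)^2 + (A2 t)^2)) * A3 t) :
    (∀ t, HasDerivAt H (-c₀ * ((B1 t)^2 + (B2 t)^2 + (B3 t)^2)) t) ∧
    (0 < c₀ → ∀ s t : ℝ, s ≤ t → H t ≤ H s) :=
  stmt11_general d k1 k2 k3 μ₀ c₀ β₂ K₀ K₂ A1 A2 A3 B1 B2 B3 B1' B2' B3' H hH hA1 hA2 hA3 hB1 hB2
    hB3 hode1 hode2 hode3
end

section
/- With β₂ = 0 and K₀ < 0, K₂ < 0, μ₀ > 0, the energies of the equilibria of the hexagonal Landau system under the functional H(A,0) = (μ₀/2)Σⱼ Aⱼ² + (K₀/4)Σⱼ Aⱼ⁴ + (K₂/2)(A₁²A₂² + A₁²A₃² + A₂²A₃²) are: H(A_R, 0) = -μ₀²/(4K₀) for the roll waves A_R = (√(-μ₀/K₀), 0, 0); H(A_H, 0) = -3μ₀²/(4(K₀+2K₂)) for the hexagons A_H = (A,A,A) with A = √(-μ₀/(K₀+2K₂)); and H(A_MM, 0) = -μ₀²/(2(K₀+K₂)) for the mixed modes with A₁ = 0, A₂ = A₃ = √(-μ₀/(K₀+K₂)).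 Consequently, H(A_H,0) < H(A_R,0) if and only if K₂ < K₀. -/
/-- With `β₂ = 0`, `K₀ < 0`, `K₂ < 0`, `μ₀ > 0`, the energies of the
equilibria under `H(A,0) = (μ₀/2)ΣAⱼ² + (K₀/4)ΣAⱼ⁴ + (K₂/2)(A₁²A₂² + A₁²A₃² +
A₂²A₃²)` are `-μ₀²/(4K₀)` for roll waves, `-3μ₀²/(4(K₀+2K₂))` for hexagons,
`-μ₀²/(2(K₀+K₂))` for mixed modes; and the hexagon energy is strictly smaller
than the roll-wave energy iff `K₂ < K₀`. -/
theorem stmt12 (μ₀ K₀ K₂ : ℝ) (hμ : 0 < μ₀) (hK0 : K₀ < 0) (hK2 : K₂ < 0)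
    (H : ℝ → ℝ → ℝ → ℝ)
    (hH : ∀ a1 a2 a3 : ℝ, H a1 a2 a3 =
        μ₀ / 2 * (a1^2 + a2^2 + a3^2) + K₀ / 4 * (a1^4 + a2^4 + a3^4)
          + K₂ / 2 * (a1^2 * a2^2 + a1^2 * a3^2 + a2^2 * a3^2)) :
    H (Real.sqrt (-μ₀ / K₀)) 0 0 = -μ₀^2 / (4 * K₀) ∧
    H (Real.sqrt (-μ₀ / (K₀ + 2 * K₂))) (Real.sqrt (-μ₀ / (K₀ + 2 * K₂)))
        (Real.sqrt (-μ₀ / (K₀ + 2 * K₂))) = -3 * μ₀^2 / (4 * (K₀ + 2 * K₂)) ∧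
    H 0 (Real.sqrt (-μ₀ / (K₀ + K₂))) (Real.sqrt (-μ₀ / (K₀ + K₂)))
        = -μ₀^2 / (2 * (K₀ + K₂)) ∧
    (-3 * μ₀^2 / (4 * (K₀ + 2 * K₂)) < -μ₀^2 / (4 * K₀) ↔ K₂ < K₀) := by
  have h1 : K₀ + 2 * K₂ < 0 := by linarith
  have h2 : K₀ + K₂ < 0 := by linarith
  have s0 : (0:ℝ) ≤ -μ₀ / K₀ := le_of_lt (div_pos_of_neg_of_neg (by linarith) hK0)
  have s1 : (0:ℝ) ≤ -μ₀ / (K₀ + 2 * K₂) := le_of_lt (div_pos_of_neg_of_neg (by linarith) h1)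
  have s2 : (0:ℝ) ≤ -μ₀ / (K₀ + K₂) := le_of_lt (div_pos_of_neg_of_neg (by linarith) h2)
  have n0 : K₀ ≠ 0 := ne_of_lt hK0
  have n1 : K₀ + 2 * K₂ ≠ 0 := ne_of_lt h1
  have n2 : K₀ + K₂ ≠ 0 := ne_of_lt h2
  have q0 := Real.sq_sqrt s0
  have q1 := Real.sq_sqrt s1
  have q2 := Real.sq_sqrt s2
  refine ⟨?_, ?_, ?_, ?_⟩
  · rw [hH]
    have h4 : Real.sqrt (-μ₀ / K₀) ^ 4 = (-μ₀ / K₀) ^ 2 := by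
      rw [show (4:ℕ) = 2 * 2 from rfl, pow_mul, q0]
    rw [q0, h4]
    field_simp
    ring
  · rw [hH]
    have h4 : Real.sqrt (-μ₀ / (K₀ + 2 * K₂)) ^ 4 = (-μ₀ / (K₀ + 2 * K₂)) ^ 2 := by
      rw [show (4:ℕ) = 2 * 2 from rfl, pow_mul, q1]
    rw [q1, h4]
    field_simp
    ring
  · rw [hH]
    have h4 : Real.sqrt (-μ₀ / (K₀ + K₂)) ^ 4 = (-μ₀ / (K₀ + K₂)) ^ 2 := by
      rw [show (4:ℕ) = 2 * 2 from rfl, pow_mul, q2]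
    rw [q2, h4]
    field_simp
    ring
  · have hμ2 : 0 < μ₀ ^ 2 := by positivity
    rw [show -3 * μ₀^2 / (4 * (K₀ + 2 * K₂)) = 3 * μ₀^2 / (-(4 * (K₀ + 2 * K₂))) by
        rw [div_neg]; ring_nf,
      show -μ₀^2 / (4 * K₀) = μ₀^2 / (-(4 * K₀)) by rw [div_neg]; ring_nf,
      div_lt_div_iff₀ (by linarith) (by linarith)]
    constructor
    · intro h; nlinarith
    · intro h; nlinarith
end

section
/- Let K₀ + 2K₂ < 0, β₂ > 0, μ₀ > 0, and define A± = (-β₂ ∓ √(β₂² - 4μ₀(K₀+2K₂)))/(2(K₀+2K₂)) and the energy E(A) = (3μ₀/2)A² + β₂A³ + 3(K₀+2K₂)A⁴/4. Then E(A₊) - E(A₋) = -β₂(β₂² - 4μ₀(K₀+2K₂))^{3/2}/(4(K₀+2K₂)³), which is strictly positive. -/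
/-! The amplitudes `A± = (-β ∓ s) / (2k)`, with `k = K₀ + 2K₂` and `s² = β² - 4μk`, are the
nonzero critical points of `E`. In `E(A₊) - E(A₋)` the terms even in `s` cancel, and after
reducing `s²` the odd part is `-β s³ / (4 k³)`, positive since `k < 0 < β`. -/

/-- The Lyapunov function `H((A,A,A), 0)` of the hexagon amplitude system, with `k = K₀ + 2K₂`. -/
noncomputable def hexagonEnergy (μ β k A : ℝ) : ℝ :=
  3 * μ / 2 * A ^ 2 + β * A ^ 3 + 3 * k * A ^ 4 / 4

theorem hexagonEnergy_sub_hexagonEnergy {μ β k s : ℝ} (hk : k ≠ 0)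
    (hs : s ^ 2 = β ^ 2 - 4 * μ * k) :
    hexagonEnergy μ β k ((-β - s) / (2 * k)) - hexagonEnergy μ β k ((-β + s) / (2 * k))
      = -β * s ^ 3 / (4 * k ^ 3) := by
  unfold hexagonEnergy
  field_simp
  linear_combination (24 * β * s) * hs

theorem neg_mul_pow_three_div_pos {β k s : ℝ} (hk : k < 0) (hβ : 0 < β) (hs : 0 < s) :
    0 < -β * s ^ 3 / (4 * k ^ 3) :=
  div_pos_of_neg_of_neg (by nlinarith [pow_pos hs 3]) (by nlinarith [pow_pos (neg_pos.mpr hk) 3])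

/-- With `K₀ + 2K₂ < 0`, `β₂ > 0`, `μ₀ > 0`, for the hexagon amplitudes
`A± = (-β₂ ∓ √(β₂² - 4μ₀(K₀+2K₂)))/(2(K₀+2K₂))` and the energy
`E(A) = (3μ₀/2)A² + β₂A³ + 3(K₀+2K₂)A⁴/4`, one has
`E(A₊) - E(A₋) = -β₂(β₂² - 4μ₀(K₀+2K₂))^{3/2}/(4(K₀+2K₂)³) > 0`. -/
theorem stmt13 (μ₀ β₂ K₀ K₂ : ℝ) (h1 : K₀ + 2 * K₂ < 0) (hβ : 0 < β₂) (hμ : 0 < μ₀)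
    (E : ℝ → ℝ)
    (hE : ∀ A : ℝ, E A = 3 * μ₀ / 2 * A^2 + β₂ * A^3 + 3 * (K₀ + 2 * K₂) * A^4 / 4)
    (Ap Am : ℝ)
    (hAp : Ap = (-β₂ - Real.sqrt (β₂^2 - 4 * μ₀ * (K₀ + 2 * K₂))) / (2 * (K₀ + 2 * K₂)))
    (hAm : Am = (-β₂ + Real.sqrt (β₂^2 - 4 * μ₀ * (K₀ + 2 * K₂))) / (2 * (K₀ + 2 * K₂))) :
    E Ap - E Am
      = -β₂ * (Real.sqrt (β₂^2 - 4 * μ₀ * (K₀ + 2 * K₂)))^3 / (4 * (K₀ + 2 * K₂)^3) ∧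
    0 < E Ap - E Am := by
  have hE' : E = hexagonEnergy μ₀ β₂ (K₀ + 2 * K₂) := funext hE
  have hdisc : 0 < β₂ ^ 2 - 4 * μ₀ * (K₀ + 2 * K₂) := by nlinarith
  have hdiff : E Ap - E Am
      = -β₂ * (Real.sqrt (β₂^2 - 4 * μ₀ * (K₀ + 2 * K₂)))^3 / (4 * (K₀ + 2 * K₂)^3) := by
    rw [hE', hAp, hAm]
    exact hexagonEnergy_sub_hexagonEnergy h1.ne (Real.sq_sqrt hdisc.le)
  exact ⟨hdiff, hdiff ▸ neg_mul_pow_three_div_pos h1 hβ (Real.sqrt_pos.mpr hdisc)⟩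
end
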